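/- Let K₃(Σ) = π/(2√3) + (1/6)·[6·(Σ³+1)^{1/3} + 2·log((Σ³+1)^{1/3} − 1) − log((Σ³+1)^{2/3} + (Σ³+1)^{1/3} + 1) − 2√3·arctan((2·(Σ³+1)^{1/3} + 1)/√3)]. Then the function Σ ↦ K₃(Σ) − Σ + 1/(6Σ²) − 1/(45Σ⁵) is O(Σ^{−7}) as Σ → ∞ (with respect to the filter at infinity on ℝ). -/

import Mathlib

open Filter Asymptotics

/-- The Kähler potential of the Ricci-flat Kähler metric on `O_{P²}(-3)`, as a function of
the invariant `Σ = |z₁|² + |z₂|² + |z₃|²`. -/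
noncomputable def K₃ (S : ℝ) : ℝ :=
  Real.pi / (2 * Real.sqrt 3) + (1 / 6) *
    (6 * (S ^ 3 + 1) ^ ((1 : ℝ) / 3)
      + 2 * Real.log ((S ^ 3 + 1) ^ ((1 : ℝ) / 3) - 1)
      - Real.log ((S ^ 3 + 1) ^ ((2 : ℝ) / 3) + (S ^ 3 + 1) ^ ((1 : ℝ) / 3) + 1)
      - 2 * Real.sqrt 3 *
          Real.arctan ((2 * (S ^ 3 + 1) ^ ((1 : ℝ) / 3) + 1) / Real.sqrt 3))

/-!
Write `u = (Σ³ + 1)^{1/3}`. Then `K₃ = G₃(u)` with `G₃` an antiderivative of `u³/(u³ - 1)`, so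
`K₃'(Σ) = u/Σ = (1 + Σ⁻³)^{1/3}`. Hence the derivative of
`F(Σ) = K₃(Σ) - Σ + 1/(6Σ²) - 1/(45Σ⁵)` is the third-order Taylor remainder of
`(1 + ε)^{1/3}` at `ε = Σ⁻³`, which is at most `Σ⁻⁹` in absolute value for `Σ ≥ 1`. Since
`F → 0` (the constant `π/(2√3)` cancels the limit of the arctangent term), integrating from `Σ`
to `∞` gives `|F(Σ)| ≤ 1/(8Σ⁸)`.
-/

open Real Topology Set

theorem nonneg_of_tendsto_zero_of_deriv_nonpos {g g' : ℝ → ℝ} {a x : ℝ}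
    (hg : ∀ y ≥ a, HasDerivAt g (g' y) y) (hg' : ∀ y ≥ a, g' y ≤ 0)
    (hg0 : Tendsto g atTop (𝓝 0)) (hx : a ≤ x) : 0 ≤ g x := by
  have hanti : AntitoneOn g (Ici a) := by
    refine antitoneOn_of_hasDerivWithinAt_nonpos (f' := g') (convex_Ici a)
      (fun y hy => (hg y hy).continuousAt.continuousWithinAt) (fun y hy => ?_) (fun y hy => ?_)
    · rw [interior_Ici] at hy
      exact (hg y hy.le).hasDerivWithinAt
    · rw [interior_Ici] at hy
      exact hg' y hy.le
  refine le_of_tendsto hg0 ?_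
  filter_upwards [eventually_ge_atTop x] with y hy
  exact hanti hx (hx.trans hy) hy

theorem abs_le_of_tendsto_zero_of_abs_deriv_le {f f' B B' : ℝ → ℝ} {a x : ℝ}
    (hf : ∀ y ≥ a, HasDerivAt f (f' y) y) (hB : ∀ y ≥ a, HasDerivAt B (B' y) y)
    (hle : ∀ y ≥ a, |f' y| ≤ -B' y) (hf0 : Tendsto f atTop (𝓝 0))
    (hB0 : Tendsto B atTop (𝓝 0)) (hx : a ≤ x) : |f x| ≤ B x := by
  have hsub : 0 ≤ B x - f x := by
    refine nonneg_of_tendsto_zero_of_deriv_nonpos (g := B - f) (fun y hy => (hB y hy).sub (hf y hy))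
      (fun y hy => ?_) (by rw [← sub_zero (0 : ℝ)]; exact hB0.sub hf0) hx
    linarith [neg_abs_le (f' y), hle y hy]
  have hadd : 0 ≤ B x + f x := by
    refine nonneg_of_tendsto_zero_of_deriv_nonpos (g := B + f) (fun y hy => (hB y hy).add (hf y hy))
      (fun y hy => ?_) (by rw [← add_zero (0 : ℝ)]; exact hB0.add hf0) hx
    linarith [le_abs_self (f' y), hle y hy]
  exact abs_le.2 ⟨by linarith, by linarith⟩

theorem abs_sub_le_of_pow_three_eq_one_add {w ε : ℝ} (hw : 0 ≤ w) (hε : 0 ≤ ε) (hε1 : ε ≤ 1)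
    (h : w ^ 3 = 1 + ε) : |w - (1 + ε / 3 - ε ^ 2 / 9)| ≤ ε ^ 3 := by
  set a := 1 + ε / 3 - ε ^ 2 / 9 with ha
  have ha1 : 1 ≤ a := by nlinarith
  have hw1 : 1 ≤ w := by nlinarith [sq_nonneg (w - 1), sq_nonneg (w + 1)]
  have e5 : ε ^ 5 ≤ ε ^ 3 := pow_le_pow_of_le_one hε hε1 (by norm_num)
  have e6 : ε ^ 6 ≤ ε ^ 5 := pow_le_pow_of_le_one hε hε1 (by norm_num)
  -- `w³ - a³ = 5ε³/27 - ε⁵/81 + ε⁶/729`, and `w³ - a³ ≥ 3(w - a)` because `w, a ≥ 1`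
  have hcube_lo : 0 ≤ w ^ 3 - a ^ 3 := by
    rw [h, ha]; nlinarith [pow_nonneg hε 6, pow_nonneg hε 3]
  have hcube_hi : w ^ 3 - a ^ 3 ≤ 5 / 27 * ε ^ 3 := by
    rw [h, ha]; nlinarith [pow_nonneg hε 5]
  have hwa : a ≤ w := le_of_pow_le_pow_left₀ three_ne_zero hw (by linarith)
  have hsum : 3 ≤ w ^ 2 + w * a + a ^ 2 := by nlinarith
  have hfactor : 3 * (w - a) ≤ w ^ 3 - a ^ 3 := by
    nlinarith [mul_le_mul_of_nonneg_left hsum (sub_nonneg.2 hwa)]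
  rw [abs_of_nonneg (sub_nonneg.2 hwa)]
  linarith [pow_nonneg hε 3]

theorem hasDerivAt_one_div_const_mul_pow (c : ℝ) (n : ℕ) {x : ℝ} (hx : x ≠ 0) :
    HasDerivAt (fun x => 1 / (c * x ^ n)) (-(n / (c * x ^ (n + 1)))) x := by
  have hfun : (fun x : ℝ => 1 / (c * x ^ n)) = fun x => c⁻¹ * x ^ (-n : ℤ) := by
    ext y
    rw [zpow_neg, zpow_natCast, one_div, mul_inv]
  rw [hfun]
  refine ((hasDerivAt_zpow (-n) x (Or.inl hx)).const_mul c⁻¹).congr_deriv ?_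
  rw [show (-n : ℤ) - 1 = -((n + 1 : ℕ) : ℤ) by push_cast; ring, zpow_neg, zpow_natCast]
  push_cast
  field_simp

theorem tendsto_one_div_const_mul_pow_atTop {c : ℝ} (hc : 0 < c) {n : ℕ} (hn : n ≠ 0) :
    Tendsto (fun x : ℝ => 1 / (c * x ^ n)) atTop (𝓝 0) :=
  tendsto_const_nhds.div_atTop ((tendsto_pow_atTop hn).const_mul_atTop hc)

-- Partial fractions: `u³/(u³ - 1) = 1 + 1/(3(u - 1)) - (u + 2)/(3(u² + u + 1))`.
noncomputable def G₃ (u : ℝ) : ℝ :=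
  π / (2 * √3) + (1 / 6) *
    (6 * u + 2 * log (u - 1) - log (u ^ 2 + u + 1) - 2 * √3 * arctan ((2 * u + 1) / √3))

theorem hasDerivAt_G₃ {u : ℝ} (hu : 1 < u) : HasDerivAt G₃ (u ^ 3 / (u ^ 3 - 1)) u := by
  have hquad : 0 < u ^ 2 + u + 1 := by positivity
  have hlin := (hasDerivAt_id' u).const_mul 6
  have hlog₁ := ((hasDerivAt_id' u).sub_const 1).log (by linarith)
  have hlog₂ := (((hasDerivAt_pow 2 u).add (hasDerivAt_id' u)).add_const 1).log hquad.ne'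
  have harctan := ((((hasDerivAt_id' u).const_mul 2).add_const 1).div_const √3).arctan
  refine HasDerivAt.congr_deriv (f := G₃) (((((hlin.add (hlog₁.const_mul 2)).sub hlog₂).sub
    (harctan.const_mul (2 * √3))).const_mul (1 / 6)).const_add (π / (2 * √3))) ?_
  have h3 : √3 ^ 2 = 3 := sq_sqrt (by norm_num)
  have hu3 : u ^ 3 - 1 ≠ 0 := by nlinarith
  have hu1 : u - 1 ≠ 0 := by linarith
  simp only [Pi.add_apply, div_pow, h3]
  field_simp
  ring

theorem tendsto_G₃_sub_self : Tendsto (fun u => G₃ u - u) atTop (𝓝 0) := by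
  have hlog : Tendsto (fun u : ℝ => 2 * log (u - 1) - log (u ^ 2 + u + 1)) atTop (𝓝 0) := by
    have hcont : ContinuousAt (fun t : ℝ => log ((1 - t) ^ 2 / (1 + t + t ^ 2))) 0 := by
      fun_prop (disch := norm_num)
    have h0 := hcont.tendsto.comp tendsto_inv_atTop_zero
    simp only [Function.comp_def] at h0
    norm_num at h0
    refine h0.congr' ?_
    filter_upwards [eventually_gt_atTop 1] with u hu
    have hquad : 0 < u ^ 2 + u + 1 := by positivity
    have hu0 : u ≠ 0 := by positivity
    have hratio : (1 - u⁻¹) ^ 2 / (1 + u⁻¹ + (u ^ 2)⁻¹) = (u - 1) ^ 2 / (u ^ 2 + u + 1) := by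
      field_simp
    rw [hratio, log_div (by nlinarith) hquad.ne', log_pow]
    push_cast
    ring
  have harctan : Tendsto (fun u : ℝ => arctan ((2 * u + 1) / √3)) atTop (𝓝 (π / 2)) :=
    (tendsto_arctan_atTop.mono_right nhdsWithin_le_nhds).comp
      (((tendsto_id.const_mul_atTop two_pos).atTop_add tendsto_const_nhds).atTop_div_const
        (by positivity))
  have hconst : π / (2 * √3) = √3 / 3 * (π / 2) := by
    field_simp
    exact (sq_sqrt zero_le_three).symm
  have := ((hlog.const_mul (1 / 6)).sub (harctan.const_mul (√3 / 3))).const_add (π / (2 * √3))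
  rw [hconst, mul_zero, zero_sub, add_neg_cancel] at this
  refine this.congr fun u => ?_
  rw [G₃, hconst]
  ring

noncomputable def cbrtCubeAddOne (S : ℝ) : ℝ := (S ^ 3 + 1) ^ ((1 : ℝ) / 3)

theorem rpow_one_third_pow {x : ℝ} (hx : 0 ≤ x) (n : ℕ) :
    (x ^ ((1 : ℝ) / 3)) ^ n = x ^ ((n : ℝ) / 3) := by
  rw [← rpow_natCast, ← rpow_mul hx]
  ring_nf

theorem cubeAddOne_nonneg {S : ℝ} (hS : -1 ≤ S) : 0 ≤ S ^ 3 + 1 := by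
  nlinarith [sq_nonneg (S - 1), sq_nonneg S]

theorem cbrtCubeAddOne_pow_three {S : ℝ} (hS : -1 ≤ S) : cbrtCubeAddOne S ^ 3 = S ^ 3 + 1 := by
  rw [cbrtCubeAddOne, rpow_one_third_pow (cubeAddOne_nonneg hS)]
  norm_num

theorem K₃_eq_G₃_cbrtCubeAddOne {S : ℝ} (hS : -1 ≤ S) : K₃ S = G₃ (cbrtCubeAddOne S) := by
  rw [K₃, G₃, cbrtCubeAddOne, rpow_one_third_pow (cubeAddOne_nonneg hS)]
  norm_num

theorem one_lt_cbrtCubeAddOne {S : ℝ} (hS : 0 < S) : 1 < cbrtCubeAddOne S :=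
  one_lt_rpow (by nlinarith [pow_pos hS 3]) (by norm_num)

theorem hasDerivAt_cbrtCubeAddOne {S : ℝ} (hS : -1 < S) :
    HasDerivAt cbrtCubeAddOne (S ^ 2 / cbrtCubeAddOne S ^ 2) S := by
  have hpos : 0 < S ^ 3 + 1 := by nlinarith [sq_nonneg (S - 1), sq_nonneg S]
  have h := (hasDerivAt_rpow_const (p := (1 : ℝ) / 3) (Or.inl hpos.ne')).comp S
    ((hasDerivAt_pow 3 S).add_const 1)
  refine h.congr_deriv ?_
  have hu3 := cbrtCubeAddOne_pow_three hS.le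
  have hu0 : 0 < cbrtCubeAddOne S := rpow_pos_of_pos hpos _
  rw [rpow_sub hpos, rpow_one, ← cbrtCubeAddOne, ← hu3]
  field_simp
  ring

theorem hasDerivAt_K₃ {S : ℝ} (hS : 0 < S) : HasDerivAt K₃ (cbrtCubeAddOne S / S) S := by
  have hK : K₃ =ᶠ[𝓝 S] G₃ ∘ cbrtCubeAddOne := by
    filter_upwards [lt_mem_nhds (show -1 < S by linarith)] with T hT
    exact K₃_eq_G₃_cbrtCubeAddOne hT.le
  refine (((hasDerivAt_G₃ (one_lt_cbrtCubeAddOne hS)).comp S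
    (hasDerivAt_cbrtCubeAddOne (by linarith))).congr_of_eventuallyEq hK).congr_deriv ?_
  have hu : cbrtCubeAddOne S ^ 3 - 1 = S ^ 3 := by
    linarith [cbrtCubeAddOne_pow_three (S := S) (by linarith)]
  have hu0 : 0 < cbrtCubeAddOne S := by linarith [one_lt_cbrtCubeAddOne hS]
  rw [hu]
  field_simp

theorem le_cbrtCubeAddOne {S : ℝ} (hS : -1 ≤ S) : S ≤ cbrtCubeAddOne S :=
  le_of_pow_le_pow_left₀ three_ne_zero (rpow_nonneg (cubeAddOne_nonneg hS) _)
    (by rw [cbrtCubeAddOne_pow_three hS]; linarith)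

theorem tendsto_cbrtCubeAddOne_sub_self :
    Tendsto (fun S => cbrtCubeAddOne S - S) atTop (𝓝 0) := by
  refine squeeze_zero' ?_ ?_ (tendsto_pow_atTop two_ne_zero).inv_tendsto_atTop
  · filter_upwards [eventually_ge_atTop (-1)] with S hS
    linarith [le_cbrtCubeAddOne hS]
  · filter_upwards [eventually_gt_atTop 0] with S hS
    have hu := le_cbrtCubeAddOne (S := S) (by linarith)
    have hu3 := cbrtCubeAddOne_pow_three (S := S) (by linarith)
    rw [Pi.inv_apply, ← one_div, le_div_iff₀ (by positivity)]
    -- `(u - S) (u² + u S + S²) = u³ - S³ = 1`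
    nlinarith [mul_nonneg (sub_nonneg.2 hu)
      (add_nonneg (sq_nonneg (cbrtCubeAddOne S)) (mul_nonneg (hS.le.trans hu) hS.le))]

theorem tendsto_K₃_sub_self : Tendsto (fun S => K₃ S - S) atTop (𝓝 0) := by
  have hu : Tendsto cbrtCubeAddOne atTop atTop :=
    tendsto_atTop_mono' _ (eventually_ge_atTop (-1) |>.mono fun S hS => le_cbrtCubeAddOne hS)
      tendsto_id
  have h := (tendsto_G₃_sub_self.comp hu).add tendsto_cbrtCubeAddOne_sub_self
  rw [add_zero] at h
  refine h.congr' ?_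
  filter_upwards [eventually_ge_atTop (-1)] with S hS
  rw [Function.comp_apply, K₃_eq_G₃_cbrtCubeAddOne hS]
  ring

theorem abs_cbrtCubeAddOne_div_sub_le {S : ℝ} (hS : 1 ≤ S) :
    |cbrtCubeAddOne S / S - 1 - 1 / (3 * S ^ 3) + 1 / (9 * S ^ 6)| ≤ 1 / S ^ 9 := by
  have hS0 : 0 < S := by linarith
  have hw : (cbrtCubeAddOne S / S) ^ 3 = 1 + 1 / S ^ 3 := by
    rw [div_pow, cbrtCubeAddOne_pow_three (by linarith)]
    field_simp
  have h := abs_sub_le_of_pow_three_eq_one_add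
    (div_nonneg (hS0.le.trans (le_cbrtCubeAddOne (by linarith))) hS0.le) (by positivity)
    ((div_le_one (by positivity)).2 (one_le_pow₀ hS)) hw
  convert h using 2
  · field_simp
    ring
  · field_simp

theorem hasDerivAt_K₃_sub_expansion {S : ℝ} (hS : 0 < S) :
    HasDerivAt (fun S => K₃ S - S + 1 / (6 * S ^ 2) - 1 / (45 * S ^ 5))
      (cbrtCubeAddOne S / S - 1 - 1 / (3 * S ^ 3) + 1 / (9 * S ^ 6)) S := by
  refine ((((hasDerivAt_K₃ hS).sub (hasDerivAt_id' S)).add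
    (hasDerivAt_one_div_const_mul_pow 6 2 hS.ne')).sub
    (hasDerivAt_one_div_const_mul_pow 45 5 hS.ne')).congr_deriv ?_
  push_cast
  field_simp
  ring

/-- The function `Σ ↦ K₃(Σ) − Σ + 1/(6Σ²) − 1/(45Σ⁵)` is `O(Σ⁻⁷)` as
`Σ → ∞`:  the asymptotic expansion `K₃(Σ) ≈ Σ − 1/(6Σ²) + 1/(45Σ⁵) + O(Σ⁻⁷)` expresses
that the Ricci-flat metric on `O_{P²}(-3)` is asymptotically flat. -/
theorem stmt_4 :
    (fun S : ℝ => K₃ S - S + 1 / (6 * S ^ 2) - 1 / (45 * S ^ 5))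
      =O[atTop] (fun S : ℝ => S ^ (-7 : ℤ)) := by
  have hlim : Tendsto (fun S : ℝ => K₃ S - S + 1 / (6 * S ^ 2) - 1 / (45 * S ^ 5))
      atTop (𝓝 0) := by
    simpa using (tendsto_K₃_sub_self.add
      (tendsto_one_div_const_mul_pow_atTop (c := 6) (by norm_num) two_ne_zero)).sub
      (tendsto_one_div_const_mul_pow_atTop (c := 45) (by norm_num) (n := 5) (by norm_num))
  refine IsBigO.of_bound 1 ?_
  filter_upwards [eventually_ge_atTop 1] with S hS
  have hS0 : 0 < S := by linarith
  have h := abs_le_of_tendsto_zero_of_abs_deriv_le (a := 1)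
    (fun T hT => hasDerivAt_K₃_sub_expansion (by linarith))
    (fun T hT => hasDerivAt_one_div_const_mul_pow 8 8 (by positivity))
    (fun T hT => (abs_cbrtCubeAddOne_div_sub_le hT).trans_eq (by push_cast; field_simp))
    hlim (tendsto_one_div_const_mul_pow_atTop (by norm_num) (by norm_num)) hS
  rw [norm_eq_abs, norm_eq_abs, one_mul, abs_of_pos (zpow_pos hS0 _)]
  refine h.trans ?_
  rw [zpow_neg, ← one_div, div_le_div_iff₀ (by positivity) (by positivity)]
  norm_cast
  nlinarith [pow_le_pow_right₀ hS (show 7 ≤ 8 by norm_num), pow_pos hS0 8]
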